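/- arXiv:1604.08909 — 4 statements merged into one kernel-verified Lean document; each statement's English description precedes it below -/
import Mathlib

section
/- In any po-group G (not necessarily directed), G satisfies RDP₀ if and only if G satisfies the Riesz Interpolation Property (RIP). -/
/-!
Both properties are invariant under translation. Given `a₁, a₂ ≤ b₁, b₂`, shifting by `-a₁` turns
the hypotheses into `0 ≤ -a₁ + b₁ ≤ (-a₁ + b₂) + (-a₂ + b₁)`; an RDP₀ decomposition
`-a₁ + b₁ = x + y` then yields the interpolant `a₁ + x`. Conversely, an interpolant `d` of
`0, a - c ≤ a, b` splits `a = d + (-d + a)` with `d ≤ b` and `-d + a ≤ c`.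
-/

section

variable (G : Type*) [AddGroup G] [Preorder G]

def RDP₀ : Prop :=
  ∀ a b c : G, 0 ≤ a → 0 ≤ b → 0 ≤ c → a ≤ b + c →
    ∃ b₁ c₁ : G, 0 ≤ b₁ ∧ 0 ≤ c₁ ∧ b₁ ≤ b ∧ c₁ ≤ c ∧ a = b₁ + c₁

def RIP : Prop :=
  ∀ a₁ a₂ b₁ b₂ : G, a₁ ≤ b₁ → a₁ ≤ b₂ → a₂ ≤ b₁ → a₂ ≤ b₂ →
    ∃ c : G, a₁ ≤ c ∧ a₂ ≤ c ∧ c ≤ b₁ ∧ c ≤ b₂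

variable {G} [AddLeftMono G] [AddRightMono G]

theorem neg_add_le_neg_add_add_neg_add {a₁ a₂ b₁ b₂ : G} (h : a₂ ≤ b₂) :
    -a₁ + b₁ ≤ (-a₁ + b₂) + (-a₂ + b₁) :=
  calc -a₁ + b₁ = -a₁ + 0 + b₁ := by rw [add_zero]
    _ ≤ -a₁ + (b₂ - a₂) + b₁ := by gcongr; exact sub_nonneg.2 h
    _ = (-a₁ + b₂) + (-a₂ + b₁) := by simp only [sub_eq_add_neg, add_assoc]

theorem RDP₀.rip (h : RDP₀ G) : RIP G := by
  intro a₁ a₂ b₁ b₂ h₁₁ h₁₂ h₂₁ h₂₂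
  obtain ⟨x, y, hx, hy, hxb, hyb, hsum⟩ :=
    h _ _ _ (le_neg_add_iff_le.2 h₁₁) (le_neg_add_iff_le.2 h₁₂) (le_neg_add_iff_le.2 h₂₁)
      (neg_add_le_neg_add_add_neg_add h₂₂)
  have hb₁ : a₁ + x + y = b₁ := by rw [add_assoc, ← neg_add_eq_iff_eq_add.1 hsum]
  refine ⟨a₁ + x, le_add_of_nonneg_right hx, ?_, hb₁ ▸ le_add_of_nonneg_right hy,
    le_neg_add_iff_add_le.1 hxb⟩
  exact le_of_add_le_add_right (hb₁ ▸ le_neg_add_iff_add_le.1 hyb : a₂ + y ≤ a₁ + x + y)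

theorem RIP.rdp₀ (h : RIP G) : RDP₀ G := by
  intro a b c ha hb hc habc
  obtain ⟨d, hd, had, hda, hdb⟩ := 
    h 0 (a - c) a b ha hb (sub_le_self a hc) (sub_le_iff_le_add.2 habc)
  exact ⟨d, -d + a, hd, le_neg_add_iff_le.2 hda, hdb,
    neg_add_le_iff_le_add.2 (sub_le_iff_le_add.1 had), (add_neg_cancel_left d a).symm⟩

end

/-- In any po-group `G` (not necessarily directed), `G` satisfies RDP₀
if and only if `G` satisfies the Riesz Interpolation Property (RIP). -/
theorem rdp0_iff_rip {G : Type*} [AddGroup G] [PartialOrder G]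
    [CovariantClass G G (· + ·) (· ≤ ·)]
    [CovariantClass G G (Function.swap (· + ·)) (· ≤ ·)] :
    (∀ a b c : G, 0 ≤ a → 0 ≤ b → 0 ≤ c → a ≤ b + c →
      ∃ b₁ c₁ : G, 0 ≤ b₁ ∧ 0 ≤ c₁ ∧ b₁ ≤ b ∧ c₁ ≤ c ∧ a = b₁ + c₁) ↔
    (∀ a₁ a₂ b₁ b₂ : G, a₁ ≤ b₁ → a₁ ≤ b₂ → a₂ ≤ b₁ → a₂ ≤ b₂ →
      ∃ c : G, a₁ ≤ c ∧ a₂ ≤ c ∧ c ≤ b₁ ∧ c ≤ b₂) :=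
  ⟨RDP₀.rip, RIP.rdp₀⟩
end

section
/- Let G be a group generated by a countable family of elements g₀,g₁,g₂,…, and let v : G → (ℝ,+) be a group homomorphism with v(gᵢ) = (1/2)ᶦ for all i ≥ 0. If every element a ∈ G with v(a) = 0 commutes with every element of G (i.e., lies in the center of G), then G is Abelian. -/
/-!
If `v x` is an integer multiple `n • v y`, then `x = (x - n • y) + n • y` with `x - n • y` in the
central kernel of `v`, so `x` commutes with `y`. Since `v (g j) = 2 ^ (i - j) • v (g i)` for
`j ≤ i`, any two generators commute, hence so does the group they generate.
-/

theorem AddMonoidHom.addCommute_of_map_eq_zsmul {G H : Type*} [AddGroup G] [AddGroup H]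
    (v : G →+ H) (hcentral : ∀ a : G, v a = 0 → ∀ b : G, a + b = b + a)
    {x y : G} {n : ℤ} (hxy : v x = n • v y) : AddCommute x y := by
  have hker : v (x - n • y) = 0 := by rw [map_sub, map_zsmul, hxy, sub_self]
  have hdecomp : x = (x - n • y) + n • y := (sub_add_cancel x _).symm
  rw [hdecomp]
  exact AddCommute.add_left (hcentral _ hker y) ((AddCommute.refl y).zsmul_left n)

theorem half_pow_eq_zsmul_half_pow {i j : ℕ} (hji : j ≤ i) :
    (1 / 2 : ℝ) ^ j = ((2 ^ (i - j) : ℕ) : ℤ) • (1 / 2 : ℝ) ^ i := by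
  rw [zsmul_eq_mul, ← Nat.sub_add_cancel hji, pow_add (1 / 2 : ℝ)]
  push_cast
  rw [Nat.add_sub_cancel, ← mul_assoc, ← mul_pow]
  norm_num

/-- Let `G` be a group generated by countably many elements `g₀, g₁, …`,
and let `v : G → ℝ` be a group homomorphism with `v (g i) = (1/2)^i` for all `i`.
If every element `a ∈ G` with `v a = 0` commutes with every element of `G`,
then `G` is Abelian. -/
theorem abelian_of_kernel_central {G : Type*} [AddGroup G] (g : ℕ → G)
    (hgen : AddSubgroup.closure (Set.range g) = ⊤)
    (v : G →+ ℝ) (hv : ∀ i : ℕ, v (g i) = (1 / 2 : ℝ) ^ i)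
    (hcentral : ∀ a : G, v a = 0 → ∀ b : G, a + b = b + a) :
    ∀ x y : G, x + y = y + x := by
  have hcomm_of_le : ∀ {i j : ℕ}, j ≤ i → AddCommute (g j) (g i) := fun hji =>
    v.addCommute_of_map_eq_zsmul hcentral (by rw [hv, hv, half_pow_eq_zsmul_half_pow hji])
  have hcomm : ∀ a ∈ Set.range g, ∀ b ∈ Set.range g, a + b = b + a := by
    rintro _ ⟨i, rfl⟩ _ ⟨j, rfl⟩
    rcases le_total j i with hji | hij
    · exact (hcomm_of_le hji).symm
    · exact hcomm_of_le hij
  have hle := AddSubgroup.closure_le_centralizer_centralizer (Set.range g)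
  rw [hgen] at hle
  intro x y
  exact Set.addCentralizer_addCentralizer_comm_of_comm hcomm x (hle trivial) y (hle trivial)
end

section
/- Let A be an arbitrary (possibly non-Abelian) group equipped with the trivial partial order (a ≤ b iff a = b), so that A is a po-group, and let G be a po-group satisfying RDP₁. Then the lexicographic product A ×⃗ G satisfies RDP₁. -/
/-- A po-group satisfies RDP₁ if every equation `a₁ + a₂ = b₁ + b₂` of positive elements
admits a Riesz decomposition `c₁₁, c₁₂, c₂₁, c₂₂ ≥ 0` in which any `0 ≤ x ≤ c₁₂` and
`0 ≤ y ≤ c₂₁` commute. -/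
def RDP1 (G : Type*) [AddGroup G] [PartialOrder G] : Prop :=
  ∀ a₁ a₂ b₁ b₂ : G, 0 ≤ a₁ → 0 ≤ a₂ → 0 ≤ b₁ → 0 ≤ b₂ → a₁ + a₂ = b₁ + b₂ →
    ∃ c₁₁ c₁₂ c₂₁ c₂₂ : G, 0 ≤ c₁₁ ∧ 0 ≤ c₁₂ ∧ 0 ≤ c₂₁ ∧ 0 ≤ c₂₂ ∧
      a₁ = c₁₁ + c₁₂ ∧ a₂ = c₂₁ + c₂₂ ∧ b₁ = c₁₁ + c₂₁ ∧ b₂ = c₁₂ + c₂₂ ∧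
      ∀ x y : G, 0 ≤ x → x ≤ c₁₂ → 0 ≤ y → y ≤ c₂₁ → x + y = y + x

/-! The map `g ↦ (0, g)` is an additive order embedding of `G` into `A ×ₗ G`, and when `A` is
trivially ordered its image contains the positive cone `{0} × G⁺`. Riesz decompositions, together
with the commutation of the elements below their off-diagonal parts, can therefore be computed in
`G` and transported along it. -/

theorem RDP1.of_addMonoidHom {G H : Type*} [AddGroup G] [PartialOrder G] [AddGroup H]
    [PartialOrder H] (f : G →+ H) (hf : ∀ g h, f g ≤ f h ↔ g ≤ h)
    (hpos : ∀ y, 0 ≤ y → ∃ g, f g = y) (hG : RDP1 G) : RDP1 H := by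
  have hinj : Function.Injective f := fun g h e =>
    le_antisymm ((hf g h).1 e.le) ((hf h g).1 e.ge)
  have hnonneg : ∀ g, 0 ≤ f g ↔ 0 ≤ g := fun g => by rw [← hf, map_zero]
  intro a₁ a₂ b₁ b₂ ha₁ ha₂ hb₁ hb₂ heq
  obtain ⟨a₁, rfl⟩ := hpos _ ha₁
  obtain ⟨a₂, rfl⟩ := hpos _ ha₂
  obtain ⟨b₁, rfl⟩ := hpos _ hb₁
  obtain ⟨b₂, rfl⟩ := hpos _ hb₂
  obtain ⟨c₁₁, c₁₂, c₂₁, c₂₂, h₁₁, h₁₂, h₂₁, h₂₂, rfl, rfl, rfl, rfl, hcomm⟩ :=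
    hG a₁ a₂ b₁ b₂ ((hnonneg _).1 ha₁) ((hnonneg _).1 ha₂) ((hnonneg _).1 hb₁)
      ((hnonneg _).1 hb₂) (hinj (by simpa only [map_add] using heq))
  refine ⟨f c₁₁, f c₁₂, f c₂₁, f c₂₂, (hnonneg _).2 h₁₁, (hnonneg _).2 h₁₂,
    (hnonneg _).2 h₂₁, (hnonneg _).2 h₂₂, map_add .., map_add .., map_add .., map_add .., ?_⟩
  intro x y hx hxc hy hyc
  obtain ⟨x, rfl⟩ := hpos x hx
  obtain ⟨y, rfl⟩ := hpos y hy
  rw [← map_add, ← map_add,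
    hcomm x y ((hnonneg x).1 hx) ((hf _ _).1 hxc) ((hnonneg y).1 hy) ((hf _ _).1 hyc)]

namespace Prod.Lex

theorem toLex_le_toLex_iff_of_fst_eq {A G : Type*} [Preorder A] [LE G] {a : A} {g h : G} :
    toLex (a, g) ≤ toLex (a, h) ↔ g ≤ h := by
  simp [toLex_le_toLex]

theorem exists_toLex_zero_eq_of_nonneg {A G : Type*} [Preorder A] [Zero A] [LE G]
    [Zero G] (htriv : ∀ a b : A, a ≤ b → a = b) {x : A ×ₗ G} (hx : 0 ≤ x) :
    ∃ g : G, toLex (0, g) = x := by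
  rcases le_iff.1 hx with hlt | ⟨hfst, -⟩
  · exact absurd (htriv _ _ hlt.le) hlt.ne
  · exact ⟨(ofLex x).2, congrArg toLex (Prod.ext hfst rfl)⟩

end Prod.Lex

theorem rdp1_lex_of_trivial_order_general {A G : Type*}
    [AddGroup A] [PartialOrder A] (htriv : ∀ a b : A, a ≤ b ↔ a = b)
    [AddGroup G] [PartialOrder G]
    (hG : RDP1 G) :
    RDP1 (A ×ₗ G) :=
  hG.of_addMonoidHom ((toLexAddEquiv (A × G)).toAddMonoidHom.comp (AddMonoidHom.inr A G))
    (fun _ _ => Prod.Lex.toLex_le_toLex_iff_of_fst_eq)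
    (fun _ => Prod.Lex.exists_toLex_zero_eq_of_nonneg fun a b => (htriv a b).1)

/-- If `A` is an arbitrary (possibly non-Abelian) group with the trivial
partial order and `G` is a po-group with RDP₁, then the lexicographic product `A ×ₗ G`
satisfies RDP₁. -/
theorem rdp1_lex_of_trivial_order {A G : Type*}
    [AddGroup A] [PartialOrder A] (htriv : ∀ a b : A, a ≤ b ↔ a = b)
    [AddGroup G] [PartialOrder G]
    [CovariantClass G G (· + ·) (· ≤ ·)]
    [CovariantClass G G (Function.swap (· + ·)) (· ≤ ·)]
    (hG : RDP1 G) :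
    RDP1 (A ×ₗ G) :=
  rdp1_lex_of_trivial_order_general htriv hG
end

section
/- Let {Aᵢ : i ∈ I} be a family of linearly ordered groups and let A = ∏_{i∈I} Aᵢ carry the componentwise (product) partial order. Let G be a directed Abelian po-group with RDP₁. Then the lexicographic product A ×⃗ G satisfies RDP₁. -/
def RieszInterpolation (G : Type*) [Preorder G] : Prop :=
  ∀ a₁ a₂ b₁ b₂ : G, a₁ ≤ b₁ → a₁ ≤ b₂ → a₂ ≤ b₁ → a₂ ≤ b₂ →
    ∃ z, a₁ ≤ z ∧ a₂ ≤ z ∧ z ≤ b₁ ∧ z ≤ b₂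

theorem RDP1.rieszInterpolation {G : Type*} [AddCommGroup G] [PartialOrder G] [AddLeftMono G]
    (hG : RDP1 G) : RieszInterpolation G := by
  intro a₁ a₂ b₁ b₂ h₁₁ h₁₂ h₂₁ h₂₂
  obtain ⟨c₁₁, c₁₂, c₂₁, c₂₂, hc₁₁, hc₁₂, hc₂₁, hc₂₂, e₁, -, e₃, e₄, -⟩ :=
    hG (b₁ - a₁) (b₂ - a₂) (b₁ - a₂) (b₂ - a₁) (sub_nonneg.2 h₁₁) (sub_nonneg.2 h₂₂)
      (sub_nonneg.2 h₂₁) (sub_nonneg.2 h₁₂) (by abel)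
  refine ⟨b₁ - c₁₁, ?_, ?_, sub_le_self _ hc₁₁, ?_⟩ <;> rw [← sub_nonneg]
  · rwa [show b₁ - c₁₁ - a₁ = c₁₂ by linear_combination (norm := abel) e₁]
  · rwa [show b₁ - c₁₁ - a₂ = c₂₁ by linear_combination (norm := abel) e₃]
  · rwa [show b₂ - (b₁ - c₁₁) = c₂₂ by linear_combination (norm := abel) e₄ - e₁]

theorem isCodirectedOrder_of_isDirectedOrder {G : Type*} [AddCommGroup G] [PartialOrder G]
    [AddLeftMono G] [IsDirectedOrder G] : IsCodirectedOrder G where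
  directed a b := by
    obtain ⟨c, hac, hbc⟩ := exists_ge_ge (-a) (-b)
    exact ⟨-c, neg_le.1 hac, neg_le.1 hbc⟩

theorem RieszInterpolation.exists_conditional {G : Type*} [Preorder G] [IsDirectedOrder G]
    [IsCodirectedOrder G] (hG : RieszInterpolation G) {p₁ p₂ q₁ q₂ : Prop} {a₁ a₂ b₁ b₂ : G}
    (h₁₁ : p₁ → q₁ → a₁ ≤ b₁) (h₁₂ : p₁ → q₂ → a₁ ≤ b₂)
    (h₂₁ : p₂ → q₁ → a₂ ≤ b₁) (h₂₂ : p₂ → q₂ → a₂ ≤ b₂) :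
    ∃ z, (p₁ → a₁ ≤ z) ∧ (p₂ → a₂ ≤ z) ∧ (q₁ → z ≤ b₁) ∧ (q₂ → z ≤ b₂) := by
  classical
  obtain ⟨u, ha₁u, ha₂u⟩ := exists_ge_ge a₁ a₂
  obtain ⟨l', hl'b₁, hl'b₂⟩ := exists_le_le b₁ b₂
  obtain ⟨l, hll', hlu⟩ := exists_le_le l' u
  have compat : ∀ (p q : Prop) [Decidable p] [Decidable q] (a b : G), (p → q → a ≤ b) →
      a ≤ u → l' ≤ b → (if p then a else l) ≤ (if q then b else u) := by
    intro p q _ _ a b hab hau hl'b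
    split_ifs with hp hq hq
    exacts [hab hp hq, hau, hll'.trans hl'b, hlu]
  obtain ⟨z, hz₁, hz₂, hz₃, hz₄⟩ := hG _ _ _ _
    (compat p₁ q₁ a₁ b₁ h₁₁ ha₁u hl'b₁) (compat p₁ q₂ a₁ b₂ h₁₂ ha₁u hl'b₂)
    (compat p₂ q₁ a₂ b₁ h₂₁ ha₂u hl'b₁) (compat p₂ q₂ a₂ b₂ h₂₂ ha₂u hl'b₂)
  exact ⟨z, fun h => by simpa [h] using hz₁, fun h => by simpa [h] using hz₂,
    fun h => by simpa [h] using hz₃, fun h => by simpa [h] using hz₄⟩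

theorem RDP1.of_linearOrder {A : Type*} [AddGroup A] [LinearOrder A] [AddLeftMono A] :
    RDP1 A := by
  intro a₁ a₂ b₁ b₂ ha₁ ha₂ hb₁ hb₂ h
  rcases le_total a₁ b₁ with hab | hba
  · refine ⟨a₁, 0, -a₁ + b₁, b₂, ha₁, le_rfl, le_neg_add_iff_le.2 hab, hb₂,
      (add_zero a₁).symm, ?_, (add_neg_cancel_left a₁ b₁).symm, (zero_add b₂).symm, ?_⟩
    · rw [add_assoc, ← h, neg_add_cancel_left]
    · intro x y hx hx0 _ _
      simp [le_antisymm hx0 hx]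
  · refine ⟨b₁, -b₁ + a₁, 0, a₂, hb₁, le_neg_add_iff_le.2 hba, le_rfl, ha₂,
      (add_neg_cancel_left b₁ a₁).symm, (zero_add a₂).symm, (add_zero b₁).symm, ?_, ?_⟩
    · rw [add_assoc, h, neg_add_cancel_left]
    · intro x y _ _ hy hy0
      simp [le_antisymm hy0 hy]

theorem RDP1.pi {I : Type*} {A : I → Type*} [∀ i, AddGroup (A i)] [∀ i, PartialOrder (A i)]
    (hA : ∀ i, RDP1 (A i)) : RDP1 (∀ i, A i) := by
  intro a₁ a₂ b₁ b₂ ha₁ ha₂ hb₁ hb₂ h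
  choose c₁₁ c₁₂ c₂₁ c₂₂ hc₁₁ hc₁₂ hc₂₁ hc₂₂ e₁ e₂ e₃ e₄ hcomm using fun i =>
    hA i (a₁ i) (a₂ i) (b₁ i) (b₂ i) (ha₁ i) (ha₂ i) (hb₁ i) (hb₂ i) (congrFun h i)
  exact ⟨c₁₁, c₁₂, c₂₁, c₂₂, hc₁₁, hc₁₂, hc₂₁, hc₂₂, funext e₁, funext e₂, funext e₃, funext e₄,
    fun x y hx hxc hy hyc => funext fun i => hcomm i (x i) (y i) (hx i) (hxc i) (hy i) (hyc i)⟩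

theorem Prod.Lex.toLex_nonneg_iff {A G : Type*} [Zero A] [PartialOrder A] [Zero G] [Preorder G]
    {a : A} {g : G} : 0 ≤ toLex (a, g) ↔ 0 ≤ a ∧ (a = 0 → 0 ≤ g) := by
  rw [← toLex_zero, ← Prod.mk_zero_zero, Prod.Lex.toLex_le_toLex']
  simp only [eq_comm]

open Prod.Lex in
theorem RDP1.prodLex {A G : Type*} [AddGroup A] [PartialOrder A] [AddCommGroup G] [PartialOrder G]
    [AddLeftMono G] [IsDirectedOrder G] (hA : RDP1 A) (hG : RieszInterpolation G) :
    RDP1 (A ×ₗ G) := by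
  have := isCodirectedOrder_of_isDirectedOrder (G := G)
  simp only [RDP1, toLex.surjective.forall, Prod.forall, ← toLex_add, Prod.mk_add_mk, toLex_inj,
    Prod.mk.injEq, toLex_nonneg_iff]
  rintro α₁ g₁ α₂ g₂ β₁ h₁ β₂ h₂ ⟨hα₁, hg₁⟩ ⟨hα₂, hg₂⟩ ⟨hβ₁, hh₁⟩ ⟨hβ₂, hh₂⟩ ⟨hα, hg⟩
  obtain ⟨γ₁₁, γ₁₂, γ₂₁, γ₂₂, hγ₁₁, hγ₁₂, hγ₂₁, hγ₂₂, rfl, rfl, rfl, rfl, hcomm⟩ :=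
    hA α₁ α₂ β₁ β₂ hα₁ hα₂ hβ₁ hβ₂ hα
  obtain ⟨t, ht₁₁, ht₂₂, ht₁₂, ht₂₁⟩ := hG.exists_conditional (p₁ := γ₁₁ = 0) (p₂ := γ₂₂ = 0)
    (q₁ := γ₁₂ = 0) (q₂ := γ₂₁ = 0) (a₁ := 0) (a₂ := h₁ - g₂) (b₁ := g₁) (b₂ := h₁)
    (fun h h' => hg₁ (by simp [h, h'])) (fun h h' => hh₁ (by simp [h, h']))
    (fun h h' => sub_le_iff_le_add.2 (hg ▸ le_add_of_nonneg_right (hh₂ (by simp [h, h']))))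
    (fun h h' => sub_le_self _ (hg₂ (by simp [h, h'])))
  refine ⟨toLex (γ₁₁, t), toLex (γ₁₂, g₁ - t), toLex (γ₂₁, h₁ - t), toLex (γ₂₂, t - (h₁ - g₂)),
    toLex_nonneg_iff.2 ⟨hγ₁₁, ht₁₁⟩, toLex_nonneg_iff.2 ⟨hγ₁₂, fun h => sub_nonneg.2 (ht₁₂ h)⟩,
    toLex_nonneg_iff.2 ⟨hγ₂₁, fun h => sub_nonneg.2 (ht₂₁ h)⟩,
    toLex_nonneg_iff.2 ⟨hγ₂₂, fun h => sub_nonneg.2 (ht₂₂ h)⟩, ?_, ?_, ?_, ?_,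
    fun ξ p η q ⟨hξ, _⟩ hξc ⟨hη, _⟩ hηc =>
      ⟨hcomm ξ η hξ (toLex_le_toLex'.1 hξc).1 hη (toLex_le_toLex'.1 hηc).1, add_comm p q⟩⟩
  all_goals rw [← toLex_add, Prod.mk_add_mk]; congr 2
  · abel
  · abel
  · abel
  · linear_combination (norm := abel) -hg

theorem rdp1_lex_pi_linear_general {I : Type*} (A : I → Type*)
    [∀ i, AddGroup (A i)] [∀ i, LinearOrder (A i)]
    [∀ i, CovariantClass (A i) (A i) (· + ·) (· ≤ ·)]
    {G : Type*} [AddCommGroup G] [PartialOrder G]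
    [CovariantClass G G (· + ·) (· ≤ ·)]
    (hdir : ∀ x y : G, ∃ z : G, x ≤ z ∧ y ≤ z)
    (hG : RDP1 G) :
    RDP1 ((∀ i, A i) ×ₗ G) :=
  have : IsDirectedOrder G := ⟨hdir⟩
  (RDP1.pi fun _ => RDP1.of_linearOrder).prodLex hG.rieszInterpolation

/-- Let `{Aᵢ}` be a family of linearly ordered groups, let `A = ∏ i, Aᵢ`
carry the componentwise partial order, and let `G` be a directed Abelian po-group with
RDP₁. Then the lexicographic product `A ×ₗ G` satisfies RDP₁. -/
theorem rdp1_lex_pi_linear {I : Type*} (A : I → Type*)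
    [∀ i, AddGroup (A i)] [∀ i, LinearOrder (A i)]
    [∀ i, CovariantClass (A i) (A i) (· + ·) (· ≤ ·)]
    [∀ i, CovariantClass (A i) (A i) (Function.swap (· + ·)) (· ≤ ·)]
    {G : Type*} [AddCommGroup G] [PartialOrder G]
    [CovariantClass G G (· + ·) (· ≤ ·)]
    (hdir : ∀ x y : G, ∃ z : G, x ≤ z ∧ y ≤ z)
    (hG : RDP1 G) :
    RDP1 ((∀ i, A i) ×ₗ G) :=
  rdp1_lex_pi_linear_general A hdir hG
end
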